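/- Fix T_s > 0 and n ∈ ℕ, n ≥ 1. Let σ have dwell time n·T_s, and suppose T₀ ≥ 0 satisfies σ(T₀) ≠ σ([T₀]⁻). Then for all t > T₀, the total mismatch time satisfies μ(t, T₀) < T_s + (t − T₀)/n. -/

import Mathlib

open MeasureTheory

/-- The last sampling time `[τ]⁻ = k Tₛ` with `k Tₛ ≤ τ < (k+1) Tₛ`. -/
noncomputable def sampleTime (Ts τ : ℝ) : ℝ := ⌊τ / Ts⌋ * Ts

/-- `s` is a switching time of `σ`: `σ` is not constant on any neighborhood of `s`. -/
def IsSwitchTime (σ : ℝ → ℕ) (s : ℝ) : Prop :=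
  ¬ ∃ ε > 0, ∀ u : ℝ, |u - s| < ε → σ u = σ s

/-- `σ` is right-continuous and piecewise constant. -/
def RightPiecewiseConstant (σ : ℝ → ℕ) : Prop :=
  ∀ s : ℝ, ∃ ε > 0, ∀ u ∈ Set.Ico s (s + ε), σ u = σ s

/-- `σ` has dwell time `d`: consecutive switching times are at least `d` apart, and
there is no switch in `[0, d)`. -/
def HasDwellTime (σ : ℝ → ℕ) (d : ℝ) : Prop :=
  (∀ s t : ℝ, IsSwitchTime σ s → IsSwitchTime σ t → s < t → d ≤ t - s) ∧
  (∀ s ∈ Set.Ico (0 : ℝ) d, ¬ IsSwitchTime σ s)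

/-- Total mismatch time `μ(t, t₀)`: the length of
`{τ ∈ [t₀, t) : σ τ ≠ σ [τ]⁻}`. -/
noncomputable def mismatchTime (Ts : ℝ) (σ : ℝ → ℕ) (t₀ t : ℝ) : ℝ :=
  (volume {τ : ℝ | τ ∈ Set.Ico t₀ t ∧ σ τ ≠ σ (sampleTime Ts τ)}).toReal

/-!
A mismatch at `τ` means `σ` switched somewhere in `[[τ]⁻, τ]`, so `τ` lies within `Tₛ` after a
switch. Hence `μ(t, T₀)` is at most `Tₛ` per switch time in `[s₀, t)`, where `s₀ ∈ (T₀ - Tₛ, T₀]`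
is the switch forced by the mismatch at `T₀`, minus the part `[s₀, T₀)` lying before `T₀`.
The dwell time separates switch times by `n Tₛ`, so there are fewer than `(t - s₀) / (n Tₛ) + 1`
of them, giving `μ(t, T₀) < Tₛ + (t - s₀) / n - (T₀ - s₀) ≤ Tₛ + (t - T₀) / n`.
-/

open Set

section

variable {σ : ℝ → ℕ}

lemma exists_isSwitchTime_mem_Icc_of_ne {a b : ℝ} (hab : a ≤ b) (hne : σ a ≠ σ b) :
    ∃ s ∈ Icc a b, IsSwitchTime σ s := by
  by_contra! h
  refine hne (isPreconnected_Icc.constant (fun x hx => ?_) ⟨le_rfl, hab⟩ ⟨hab, le_rfl⟩)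
  obtain ⟨ε, hε, hconst⟩ := not_not.mp (h x hx)
  have : σ =ᶠ[nhds x] fun _ => σ x :=
    Metric.eventually_nhds_iff.2 ⟨ε, hε, fun y hy => hconst y (Real.dist_eq y x ▸ hy)⟩
  exact this.continuousAt.continuousWithinAt

lemma sampleTime_le {Ts : ℝ} (hTs : 0 < Ts) (τ : ℝ) : sampleTime Ts τ ≤ τ :=
  (le_div_iff₀ hTs).1 (Int.floor_le _)

lemma lt_sampleTime_add {Ts : ℝ} (hTs : 0 < Ts) (τ : ℝ) : τ < sampleTime Ts τ + Ts := by
  have := (div_lt_iff₀ hTs).1 (Int.lt_floor_add_one (τ / Ts))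
  rw [sampleTime]
  linarith

lemma exists_isSwitchTime_of_ne_sampleTime {Ts τ : ℝ} (hTs : 0 < Ts)
    (h : σ τ ≠ σ (sampleTime Ts τ)) : ∃ s, IsSwitchTime σ s ∧ s ≤ τ ∧ τ < s + Ts := by
  obtain ⟨s, ⟨hs₁, hs₂⟩, hs⟩ := exists_isSwitchTime_mem_Icc_of_ne (sampleTime_le hTs τ) h.symm
  exact ⟨s, hs, hs₂, (lt_sampleTime_add hTs τ).trans_le (by linarith)⟩

lemma HasDwellTime.pairwise_isSwitchTime {d : ℝ} (h : HasDwellTime σ d) :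
    {s | IsSwitchTime σ s}.Pairwise fun x y => d ≤ |x - y| := by
  intro x hx y hy hxy
  rcases hxy.lt_or_gt with hlt | hlt
  · rw [abs_sub_comm, abs_of_pos (sub_pos.2 hlt)]
    exact h.1 x y hx hy hlt
  · rw [abs_of_pos (sub_pos.2 hlt)]
    exact h.1 y x hy hx hlt

lemma finite_and_ncard_le_of_pairwise_le_abs_sub {S : Set ℝ} {a b d : ℝ} (hd : 0 < d)
    (hS : S ⊆ Ico a b) (hsep : S.Pairwise fun x y => d ≤ |x - y|) :
    S.Finite ∧ S.ncard ≤ ⌈(b - a) / d⌉₊ := by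
  set f : ℝ → ℕ := fun x => ⌊(x - a) / d⌋₊
  have hmaps : MapsTo f S (Finset.range ⌈(b - a) / d⌉₊ : Set ℕ) := fun x hx => by
    have := hS hx
    simp only [Finset.coe_range, mem_Iio, mem_Ico] at this ⊢
    exact Nat.floor_lt_ceil_of_lt_of_pos (by gcongr; linarith) (by apply div_pos <;> linarith)
  have hinj : InjOn f S := by
    intro x hx y hy hxy
    by_contra hne
    have hx0 : 0 ≤ (x - a) / d := div_nonneg (sub_nonneg.2 (hS hx).1) hd.le
    have hy0 : 0 ≤ (y - a) / d := div_nonneg (sub_nonneg.2 (hS hy).1) hd.le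
    have : |(x - a) / d - (y - a) / d| < 1 := by
      apply Int.abs_sub_lt_one_of_floor_eq_floor
      rw [← Int.natCast_floor_eq_floor hx0, ← Int.natCast_floor_eq_floor hy0]
      exact congrArg _ hxy
    rw [← sub_div, sub_sub_sub_cancel_right, abs_div, abs_of_pos hd, div_lt_one hd] at this
    exact (hsep hx hy hne).not_gt this
  exact ⟨Finite.of_injOn hmaps hinj (Finset.finite_toSet _),
    (ncard_le_ncard_of_injOn f hmaps hinj (Finset.finite_toSet _)).trans (by simp)⟩

lemma mismatchTime_le_sum {Ts T₀ t : ℝ} (hTs : 0 < Ts) (F : Finset ℝ)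
    (hF : ∀ s, IsSwitchTime σ s → T₀ - Ts < s → s < t → s ∈ F) (hF_ge : ∀ s ∈ F, T₀ - Ts ≤ s) :
    mismatchTime Ts σ T₀ t ≤ ∑ s ∈ F, (s + Ts - max s T₀) := by
  have hcover : {τ | τ ∈ Ico T₀ t ∧ σ τ ≠ σ (sampleTime Ts τ)} ⊆
      ⋃ s ∈ F, Ico (max s T₀) (s + Ts) := by
    rintro τ ⟨⟨hT₀τ, hτt⟩, hτ⟩
    obtain ⟨s, hs, hsτ, hτs⟩ := exists_isSwitchTime_of_ne_sampleTime hTs hτ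
    exact mem_biUnion (hF s hs (by linarith) (by linarith)) ⟨max_le hsτ hT₀τ, hτs⟩
  calc mismatchTime Ts σ T₀ t ≤ volume.real (⋃ s ∈ F, Ico (max s T₀) (s + Ts)) :=
        measureReal_mono hcover
          (measure_biUnion_lt_top F.finite_toSet fun _ _ => measure_Ico_lt_top).ne
    _ ≤ ∑ s ∈ F, volume.real (Ico (max s T₀) (s + Ts)) := measureReal_biUnion_finset_le _ _
    _ = ∑ s ∈ F, (s + Ts - max s T₀) := Finset.sum_congr rfl fun s hs =>
        Real.volume_real_Ico_of_le (max_le (by linarith) (by linarith [hF_ge s hs]))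

lemma sum_add_sub_max_le {F : Finset ℝ} {a L s₀ : ℝ} (hs₀ : s₀ ∈ F) (hs₀a : s₀ ≤ a) :
    ∑ s ∈ F, (s + L - max s a) ≤ F.card * L - (a - s₀) := by
  have : a - s₀ ≤ ∑ s ∈ F, (max s a - s) := by
    simpa [max_eq_right hs₀a] using
      Finset.single_le_sum (fun s _ => sub_nonneg.2 (le_max_left s a)) hs₀
  have hsum : ∑ s ∈ F, (s + L - max s a) = F.card * L - ∑ s ∈ F, (max s a - s) := by
    rw [← nsmul_eq_mul, ← Finset.sum_const, ← Finset.sum_sub_distrib]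
    exact Finset.sum_congr rfl fun s _ => by ring
  linarith

end

theorem mismatchTime_lt_of_dwellTime_of_mismatch_general (Ts : ℝ) (hTs : 0 < Ts) (n : ℕ) (hn : 1 ≤ n)
    (σ : ℝ → ℕ) (hdwell : HasDwellTime σ (n * Ts))
    (T₀ : ℝ) (hmm : σ T₀ ≠ σ (sampleTime Ts T₀))
    (t : ℝ) (ht : T₀ < t) :
    mismatchTime Ts σ T₀ t < Ts + (t - T₀) / n := by
  have hn' : (1 : ℝ) ≤ n := by exact_mod_cast hn
  have hsep := hdwell.pairwise_isSwitchTime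
  obtain ⟨s₀, hs₀, hs₀T₀, hT₀s₀⟩ := exists_isSwitchTime_of_ne_sampleTime hTs hmm
  -- a switch in `(T₀ - Tₛ, s₀)` would lie within `Tₛ ≤ n Tₛ` of `s₀`
  have hmin : ∀ s, IsSwitchTime σ s → T₀ - Ts < s → s₀ ≤ s := fun s hs hs' => by
    by_contra! hlt
    have : n * Ts ≤ |s - s₀| := hsep hs hs₀ hlt.ne
    rw [abs_of_neg (sub_neg.2 hlt)] at this
    nlinarith
  obtain ⟨hfin, hcard⟩ := finite_and_ncard_le_of_pairwise_le_abs_sub (by positivity)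
    (fun s (hs : IsSwitchTime σ s ∧ s ∈ Ico s₀ t) => hs.2) (hsep.mono fun s hs => hs.1)
  have hμ := mismatchTime_le_sum hTs hfin.toFinset
    (fun s hs h₁ h₂ => hfin.mem_toFinset.2 ⟨hs, hmin s hs h₁, h₂⟩)
    (fun s hs => by linarith [(hfin.mem_toFinset.1 hs).2.1])
  have hsum := sum_add_sub_max_le (L := Ts) (hfin.mem_toFinset.2 ⟨hs₀, le_rfl, by linarith⟩) hs₀T₀
  have hcard' : (hfin.toFinset.card : ℝ) < (t - s₀) / (n * Ts) + 1 := by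
    rw [← ncard_eq_toFinset_card _ hfin]
    exact (Nat.cast_le.2 hcard).trans_lt (Nat.ceil_lt_add_one (by apply div_nonneg <;> nlinarith))
  have hloss : 0 ≤ (T₀ - s₀) * (1 - 1 / n) :=
    mul_nonneg (by linarith) (sub_nonneg.2 (div_le_one_of_le₀ hn' (by linarith)))
  calc mismatchTime Ts σ T₀ t ≤ hfin.toFinset.card * Ts - (T₀ - s₀) := hμ.trans hsum
    _ < ((t - s₀) / (n * Ts) + 1) * Ts - (T₀ - s₀) := by gcongr
    _ = Ts + (t - T₀) / n - (T₀ - s₀) * (1 - 1 / n) := by field_simp; ring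
    _ ≤ Ts + (t - T₀) / n := by linarith

/-- If `σ` has dwell time `n Tₛ` (`n ≥ 1`) and the modes mismatch at time `T₀ ≥ 0`
(i.e. `σ T₀ ≠ σ [T₀]⁻`), then the total mismatch time on `[T₀, t)` satisfies
`μ(t, T₀) < Tₛ + (t - T₀) / n` for all `t > T₀`. -/
theorem mismatchTime_lt_of_dwellTime_of_mismatch (Ts : ℝ) (hTs : 0 < Ts) (n : ℕ) (hn : 1 ≤ n)
    (σ : ℝ → ℕ) (hσ : RightPiecewiseConstant σ) (hdwell : HasDwellTime σ (n * Ts))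
    (T₀ : ℝ) (hT₀ : 0 ≤ T₀) (hmm : σ T₀ ≠ σ (sampleTime Ts T₀))
    (t : ℝ) (ht : T₀ < t) :
    mismatchTime Ts σ T₀ t < Ts + (t - T₀) / n :=
  mismatchTime_lt_of_dwellTime_of_mismatch_general Ts hTs n hn σ hdwell T₀ hmm t ht
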